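/- For every w ∈ (0,1] and x ∈ 𝒳, define W^w(y|x) := w⁻¹ · Q_Y(y) · Leb{u ∈ [0,1] : p_c(x,y,u) ≤ w}, where Leb is Lebesgue measure on [0,1]. Then for each x ∈ 𝒳, y ↦ W^w(y|x) is a probability mass function on 𝒴 (i.e., Σ_{y∈𝒴} W^w(y|x) = 1), and D̃(w,Q_Y) = Σ_{x∈𝒳} Σ_{y∈𝒴} P_X(x) W^w(y|x) d(x,y). -/

import Mathlib

/-!
Group the outputs `y` by the level `t = d x y`. On level `t` the map `u ↦ p_c(x,y,u)` runs
affinely over `[Q{d < t}, Q{d ≤ t}]`, so the level contributes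
`Q{d = t} · Leb{u : p_c ≤ w} = min w Q{d ≤ t} - min w Q{d < t}`. As `t` increases these
intervals tile `[0,1]`, so the contributions telescope to `min w 1 - min w 0 = w`.
-/

open MeasureTheory

/-- The pairwise correct probability `p_c(x,y,u)` with respect to the pmf `Q` on `Y`:
`p_c(x,y,u) = Q{y' : d(x,y') < d(x,y)} + u * Q{y' : d(x,y') = d(x,y)}`. -/
noncomputable def pc {X Y : Type*} [Fintype Y] (Q : Y → ℝ) (d : X → Y → ℝ)
    (x : X) (y : Y) (u : ℝ) : ℝ :=
  (∑ y' : Y, if d x y' < d x y then Q y' else 0)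
    + u * (∑ y' : Y, if d x y' = d x y then Q y' else 0)

/-- The functional `D̃(w,Q) = w⁻¹ ⬝ E_{P ⊗ Q ⊗ Unif[0,1]}[ d(X,Y) ⬝ 1{p_c(X,Y,U) ≤ w} ]`. -/
noncomputable def Dtilde {X Y : Type*} [Fintype X] [Fintype Y]
    (P : X → ℝ) (Q : Y → ℝ) (d : X → Y → ℝ) (w : ℝ) : ℝ :=
  w⁻¹ * ∑ x : X, ∑ y : Y, P x * Q y * d x y *
    (∫ u in Set.Icc (0:ℝ) 1, if pc Q d x y u ≤ w then (1:ℝ) else 0)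

theorem Finset.sum_sub_filter_le_filter_lt {α β G : Type*} [LinearOrder α] [AddCommMonoid β]
    [AddCommGroup G] (m : β → G) (W : α → β) (S : Finset α) :
    ∑ t ∈ S, (m (∑ s ∈ S with s ≤ t, W s) - m (∑ s ∈ S with s < t, W s))
      = m (∑ s ∈ S, W s) - m 0 := by
  induction S using Finset.induction_on_max with
  | empty => simp
  | insert a S hlt ih =>
    have ha : a ∉ S := fun h => lt_irrefl a (hlt a h)
    have hle : (insert a S).filter (· ≤ a) = insert a S :=
      Finset.filter_true_of_mem fun s hs =>
        (Finset.mem_insert.mp hs).elim le_of_eq fun h => (hlt s h).le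
    have hlt' : (insert a S).filter (· < a) = S := by
      rw [Finset.filter_insert, if_neg (lt_irrefl a)]
      exact Finset.filter_true_of_mem hlt
    have hbelow : ∑ t ∈ S, (m (∑ s ∈ insert a S with s ≤ t, W s)
          - m (∑ s ∈ insert a S with s < t, W s))
        = ∑ t ∈ S, (m (∑ s ∈ S with s ≤ t, W s) - m (∑ s ∈ S with s < t, W s)) :=
      Finset.sum_congr rfl fun t ht => by
        simp only [Finset.filter_insert, not_le.mpr (hlt t ht), not_lt.mpr (hlt t ht).le,
          if_false]
    rw [Finset.sum_insert ha, hle, hlt', hbelow, ih, Finset.sum_insert ha]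
    abel

theorem mul_volume_setOf_affine_le (a b w : ℝ) (hb : 0 ≤ b) :
    b * (volume {u : ℝ | u ∈ Set.Icc (0:ℝ) 1 ∧ a + u * b ≤ w}).toReal
      = min w (a + b) - min w a := by
  rcases hb.eq_or_lt with rfl | hb
  · simp
  have hset : {u : ℝ | u ∈ Set.Icc (0:ℝ) 1 ∧ a + u * b ≤ w}
      = Set.Icc 0 (min 1 ((w - a) / b)) := by
    ext u
    simp only [Set.mem_ofPred_eq, Set.mem_Icc, le_min_iff, le_div_iff₀ hb]
    constructor
    · rintro ⟨⟨h0, h1⟩, h⟩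
      exact ⟨h0, h1, by linarith⟩
    · rintro ⟨h0, h1, h⟩
      exact ⟨⟨h0, h1⟩, by linarith⟩
  rw [hset, Real.volume_Icc, sub_zero, ENNReal.toReal_ofReal', mul_max_of_nonneg _ _ hb.le,
    mul_min_of_nonneg _ _ hb.le, mul_div_cancel₀ _ hb.ne', mul_one, mul_zero]
  simp only [min_def, max_def]
  split_ifs <;> linarith

theorem setIntegral_ite_one_eq_toReal {α : Type*} [MeasurableSpace α] (μ : Measure α)
    (s : Set α) {p : α → Prop} [DecidablePred p] (hp : MeasurableSet {u | p u}) :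
    ∫ u in s, (if p u then (1:ℝ) else 0) ∂μ = (μ {u | u ∈ s ∧ p u}).toReal := by
  have h : (fun u => if p u then (1:ℝ) else 0) = {u | p u}.indicator 1 := by
    ext u
    simp [Set.indicator_apply]
  rw [h, integral_indicator_one hp, measureReal_def, Measure.restrict_apply hp, Set.inter_comm]
  rfl

section PairwiseCorrect

variable {X Y : Type*} [Fintype Y] (Q : Y → ℝ) (d : X → Y → ℝ) (x : X)

theorem continuous_pc (y : Y) : Continuous (pc Q d x y) := by
  unfold pc
  fun_prop

theorem sum_mul_volume_pc_le_eq (hQ0 : ∀ y, 0 ≤ Q y) (hQ1 : ∑ y, Q y = 1) {w : ℝ}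
    (hw0 : 0 ≤ w) (hw1 : w ≤ 1) :
    ∑ y, Q y * (volume {u : ℝ | u ∈ Set.Icc (0:ℝ) 1 ∧ pc Q d x y u ≤ w}).toReal = w := by
  classical
  set S := Finset.univ.image (d x)
  set mass : ℝ → ℝ := fun t => ∑ y with d x y = t, Q y
  have hS : ∀ y ∈ Finset.univ, d x y ∈ S := fun y _ =>
    Finset.mem_image_of_mem _ (Finset.mem_univ y)
  have hmass (p : ℝ → Prop) [DecidablePred p] :
      ∑ t ∈ S with p t, mass t = ∑ y with p (d x y), Q y := by
    rw [Finset.sum_fiberwise_eq_sum_filter]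
    congr 1
    ext y
    simp [S]
  have hpc : ∀ y u, pc Q d x y u = ∑ t ∈ S with t < d x y, mass t + u * mass (d x y) := by
    intro y u
    rw [hmass]
    simp only [pc, mass, Finset.sum_filter]
  have hlevel : ∀ t, mass t * (volume {u : ℝ | u ∈ Set.Icc (0:ℝ) 1 ∧
        ∑ s ∈ S with s < t, mass s + u * mass t ≤ w}).toReal
      = min w (∑ s ∈ S with s ≤ t, mass s) - min w (∑ s ∈ S with s < t, mass s) := by
    intro t
    rw [mul_volume_setOf_affine_le _ _ _ (Finset.sum_nonneg fun y _ => hQ0 y), hmass, hmass]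
    simp only [le_iff_lt_or_eq, Finset.filter_or]
    rw [Finset.sum_union (Finset.disjoint_filter.2 fun _ _ h h' => h.ne h')]
  calc ∑ y, Q y * (volume {u : ℝ | u ∈ Set.Icc (0:ℝ) 1 ∧ pc Q d x y u ≤ w}).toReal
      = ∑ t ∈ S, mass t * (volume {u : ℝ | u ∈ Set.Icc (0:ℝ) 1 ∧
          ∑ s ∈ S with s < t, mass s + u * mass t ≤ w}).toReal := by
        rw [← Finset.sum_fiberwise_of_maps_to hS]
        refine Finset.sum_congr rfl fun t _ => ?_
        rw [Finset.sum_mul]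
        refine Finset.sum_congr rfl fun y hy => ?_
        simp_rw [hpc y, (Finset.mem_filter.mp hy).2]
    _ = ∑ t ∈ S, (min w (∑ s ∈ S with s ≤ t, mass s) - min w (∑ s ∈ S with s < t, mass s)) :=
        Finset.sum_congr rfl fun t _ => hlevel t
    _ = w := by
        rw [Finset.sum_sub_filter_le_filter_lt, Finset.sum_fiberwise_of_maps_to hS, hQ1,
          min_eq_left hw1, min_eq_right hw0, sub_zero]

end PairwiseCorrect

theorem channel_Ww {X Y : Type*} [Fintype X] [Fintype Y]
    (P : X → ℝ)
    (Q : Y → ℝ) (hQ0 : ∀ y, 0 ≤ Q y) (hQ1 : ∑ y : Y, Q y = 1)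
    (d : X → Y → ℝ)
    (w : ℝ) (hw : w ∈ Set.Ioc (0:ℝ) 1) :
    (∀ x : X, ∑ y : Y, w⁻¹ * Q y *
        (volume {u : ℝ | u ∈ Set.Icc (0:ℝ) 1 ∧ pc Q d x y u ≤ w}).toReal = 1)
    ∧ Dtilde P Q d w = ∑ x : X, ∑ y : Y, P x * (w⁻¹ * Q y *
        (volume {u : ℝ | u ∈ Set.Icc (0:ℝ) 1 ∧ pc Q d x y u ≤ w}).toReal) * d x y := by
  obtain ⟨hw0, hw1⟩ := hw
  refine ⟨fun x => ?_, ?_⟩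
  · simp_rw [mul_assoc, ← Finset.mul_sum]
    rw [sum_mul_volume_pc_le_eq Q d x hQ0 hQ1 hw0.le hw1, inv_mul_cancel₀ hw0.ne']
  · rw [Dtilde, Finset.mul_sum]
    refine Finset.sum_congr rfl fun x _ => ?_
    rw [Finset.mul_sum]
    refine Finset.sum_congr rfl fun y _ => ?_
    rw [setIntegral_ite_one_eq_toReal _ _
      (measurableSet_le (continuous_pc Q d x y).measurable measurable_const)]
    ring
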